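/- Consider the RBM sequence setting with sup_{N >= 1} N_H(N)/N < infinity. Then the marginal (visible) RBM model sequence P_N is S-unstable (i.e. LREP(P_N)/N tends to infinity) if and only if A_N/N tends to infinity, where A_N = max_x max_h f_N(x,h) - min_x max_h f_N(x,h); moreover, if the sequence A_N/N is bounded then sup_{N >= 1} LREP(P_N)/N < infinity. (Proposition 2(iii.1)) -/
import Mathlib


/-- ±1 encoding of a Boolean spin. -/
noncomputable def sgn (b : Bool) : ℝ := if b then 1 else -1

/-- The RBM linear function `f(x,h)` of visible outcomes `x` and hidden outcomes `h`. -/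
noncomputable def rbmF {N NH : ℕ} (θV : Fin N → ℝ) (θH : Fin NH → ℝ)
    (θVH : Fin N → Fin NH → ℝ) (x : Fin N → Bool) (h : Fin NH → Bool) : ℝ :=
  (∑ i, sgn (x i) * θV i) + (∑ j, sgn (h j) * θH j) +
    ∑ i, ∑ j, sgn (x i) * sgn (h j) * θVH i j

/-- The joint RBM model on pairs `(x,h)`. -/
noncomputable def rbmJoint {N NH : ℕ} (θV : Fin N → ℝ) (θH : Fin NH → ℝ)
    (θVH : Fin N → Fin NH → ℝ) (p : (Fin N → Bool) × (Fin NH → Bool)) : ℝ :=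
  Real.exp (rbmF θV θH θVH p.1 p.2) /
    ∑ q : (Fin N → Bool) × (Fin NH → Bool), Real.exp (rbmF θV θH θVH q.1 q.2)

/-- The marginal (visible) RBM model. -/
noncomputable def rbmMarginal {N NH : ℕ} (θV : Fin N → ℝ) (θH : Fin NH → ℝ)
    (θVH : Fin N → Fin NH → ℝ) (x : Fin N → Bool) : ℝ :=
  ∑ h : Fin NH → Bool, rbmJoint θV θH θVH (x, h)

/-- `A = max_x max_h f(x,h) - min_x max_h f(x,h)`. -/
noncomputable def rbmA {N NH : ℕ} (θV : Fin N → ℝ) (θH : Fin NH → ℝ)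
    (θVH : Fin N → Fin NH → ℝ) : ℝ :=
  (Finset.univ.sup' Finset.univ_nonempty fun x : Fin N → Bool =>
      Finset.univ.sup' Finset.univ_nonempty fun h : Fin NH → Bool => rbmF θV θH θVH x h) -
    (Finset.univ.inf' Finset.univ_nonempty fun x : Fin N → Bool =>
      Finset.univ.sup' Finset.univ_nonempty fun h : Fin NH → Bool => rbmF θV θH θVH x h)

/-- `k(h) = ∑_i |θV_i + ∑_j h_j θVH_{ij}|`. -/
noncomputable def rbmk {N NH : ℕ} (θV : Fin N → ℝ) (θVH : Fin N → Fin NH → ℝ)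
    (h : Fin NH → Bool) : ℝ :=
  ∑ i, |θV i + ∑ j, sgn (h j) * θVH i j|

/-- `B = max_h k(h)`. -/
noncomputable def rbmB {N NH : ℕ} (θV : Fin N → ℝ) (θVH : Fin N → Fin NH → ℝ) : ℝ :=
  Finset.univ.sup' Finset.univ_nonempty (rbmk θV θVH)

/-- The log-ratio of extremal probabilities of a positive function on a finite nonempty type. -/
noncomputable def LREP {S : Type*} [Fintype S] [Nonempty S] (P : S → ℝ) : ℝ :=
  Real.log (Finset.univ.sup' Finset.univ_nonempty P / Finset.univ.inf' Finset.univ_nonempty P)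

lemma rbm_key {N NH : ℕ} (θV : Fin N → ℝ) (θH : Fin NH → ℝ) (θVH : Fin N → Fin NH → ℝ) :
    |LREP (rbmMarginal θV θH θVH) - rbmA θV θH θVH| ≤ (NH : ℝ) * Real.log 2 := by
  set F : (Fin N → Bool) → ℝ := fun x =>
    Finset.univ.sup' Finset.univ_nonempty fun h : Fin NH → Bool => rbmF θV θH θVH x h with hFdef
  set g : (Fin N → Bool) → ℝ :=
    fun x => ∑ h : Fin NH → Bool, Real.exp (rbmF θV θH θVH x h) with hgdef
  have gpos : ∀ x, 0 < g x := fun x =>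
    Finset.sum_pos (fun h _ => Real.exp_pos _) Finset.univ_nonempty
  -- pointwise bounds on log g
  have hlow : ∀ x, F x ≤ Real.log (g x) := by
    intro x
    rw [Real.le_log_iff_exp_le (gpos x)]
    obtain ⟨h0, -, hh0⟩ := Finset.exists_mem_eq_sup' (Finset.univ_nonempty)
      (fun h : Fin NH → Bool => rbmF θV θH θVH x h)
    have : F x = rbmF θV θH θVH x h0 := hh0
    rw [this]
    exact Finset.single_le_sum (f := fun h => Real.exp (rbmF θV θH θVH x h))
      (fun h _ => (Real.exp_pos _).le) (Finset.mem_univ h0)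
  have hhigh : ∀ x, Real.log (g x) ≤ F x + (NH : ℝ) * Real.log 2 := by
    intro x
    have h1 : g x ≤ (2 : ℝ) ^ NH * Real.exp (F x) := by
      have : g x ≤ ∑ _h : Fin NH → Bool, Real.exp (F x) := by
        apply Finset.sum_le_sum
        intro h _
        exact Real.exp_le_exp.mpr (Finset.le_sup' _ (Finset.mem_univ h))
      calc g x ≤ ∑ _h : Fin NH → Bool, Real.exp (F x) := this
        _ = (2 : ℝ) ^ NH * Real.exp (F x) := by
          simp [Finset.sum_const, Finset.card_univ, Fintype.card_fun, nsmul_eq_mul]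
    calc Real.log (g x) ≤ Real.log ((2 : ℝ) ^ NH * Real.exp (F x)) :=
          Real.log_le_log (gpos x) h1
      _ = F x + (NH : ℝ) * Real.log 2 := by
          rw [Real.log_mul (by positivity) (Real.exp_ne_zero _), Real.log_pow, Real.log_exp]
          ring
  -- the partition function
  set Z : ℝ := ∑ q : (Fin N → Bool) × (Fin NH → Bool), Real.exp (rbmF θV θH θVH q.1 q.2)
    with hZdef
  have Zpos : 0 < Z :=
    Finset.sum_pos (fun q _ => Real.exp_pos _) Finset.univ_nonempty
  have hmar : rbmMarginal θV θH θVH = fun x => g x / Z := by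
    funext x
    simp only [rbmMarginal, rbmJoint, hgdef, hZdef]
    rw [← Finset.sum_div]
  -- sup and inf of marginal
  have hsup : (Finset.univ.sup' Finset.univ_nonempty (rbmMarginal θV θH θVH)) =
      (Finset.univ.sup' Finset.univ_nonempty g) / Z := by
    rw [hmar]
    apply le_antisymm
    · apply Finset.sup'_le
      intro x _
      exact div_le_div_of_nonneg_right (Finset.le_sup' _ (Finset.mem_univ x)) Zpos.le
    · obtain ⟨x0, -, hx0⟩ := Finset.exists_mem_eq_sup' (Finset.univ_nonempty) g
      rw [hx0]
      exact Finset.le_sup' (fun x => g x / Z) (Finset.mem_univ x0)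
  have hinf : (Finset.univ.inf' Finset.univ_nonempty (rbmMarginal θV θH θVH)) =
      (Finset.univ.inf' Finset.univ_nonempty g) / Z := by
    rw [hmar]
    apply le_antisymm
    · obtain ⟨x0, -, hx0⟩ := Finset.exists_mem_eq_inf' (Finset.univ_nonempty) g
      rw [hx0]
      exact Finset.inf'_le (fun x => g x / Z) (Finset.mem_univ x0)
    · apply Finset.le_inf'
      intro x _
      exact div_le_div_of_nonneg_right (Finset.inf'_le _ (Finset.mem_univ x)) Zpos.le
  -- positivity of sup'/inf' g
  obtain ⟨xs, -, hxs⟩ := Finset.exists_mem_eq_sup' (Finset.univ_nonempty) g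
  obtain ⟨xi, -, hxi⟩ := Finset.exists_mem_eq_inf' (Finset.univ_nonempty) g
  have supg_pos : 0 < Finset.univ.sup' Finset.univ_nonempty g := hxs ▸ gpos xs
  have infg_pos : 0 < Finset.univ.inf' Finset.univ_nonempty g := hxi ▸ gpos xi
  have hLREP : LREP (rbmMarginal θV θH θVH) =
      Real.log (Finset.univ.sup' Finset.univ_nonempty g) -
        Real.log (Finset.univ.inf' Finset.univ_nonempty g) := by
    have : Finset.univ.sup' Finset.univ_nonempty g / Z /
        (Finset.univ.inf' Finset.univ_nonempty g / Z) =
        Finset.univ.sup' Finset.univ_nonempty g /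
          Finset.univ.inf' Finset.univ_nonempty g := by
      field_simp
    rw [LREP, hsup, hinf, this,
      Real.log_div (ne_of_gt supg_pos) (ne_of_gt infg_pos)]
  -- bounds on log of sup/inf of g
  obtain ⟨x1, -, hx1⟩ := Finset.exists_mem_eq_sup' (Finset.univ_nonempty) F
  obtain ⟨x2, -, hx2⟩ := Finset.exists_mem_eq_inf' (Finset.univ_nonempty) F
  have c1 : Finset.univ.sup' Finset.univ_nonempty F ≤
      Real.log (Finset.univ.sup' Finset.univ_nonempty g) := by
    rw [hx1]
    exact le_trans (hlow x1)
      (Real.log_le_log (gpos x1) (Finset.le_sup' g (Finset.mem_univ x1)))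
  have c2 : Real.log (Finset.univ.sup' Finset.univ_nonempty g) ≤
      Finset.univ.sup' Finset.univ_nonempty F + (NH : ℝ) * Real.log 2 := by
    rw [hxs]
    exact le_trans (hhigh xs)
      (by gcongr; exact Finset.le_sup' F (Finset.mem_univ xs))
  have c3 : Finset.univ.inf' Finset.univ_nonempty F ≤
      Real.log (Finset.univ.inf' Finset.univ_nonempty g) := by
    rw [hxi]
    exact le_trans (Finset.inf'_le F (Finset.mem_univ xi)) (hlow xi)
  have c4 : Real.log (Finset.univ.inf' Finset.univ_nonempty g) ≤
      Finset.univ.inf' Finset.univ_nonempty F + (NH : ℝ) * Real.log 2 := by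
    rw [hx2]
    exact le_trans (Real.log_le_log infg_pos (Finset.inf'_le g (Finset.mem_univ x2)))
      (hhigh x2)
  have hA : rbmA θV θH θVH = Finset.univ.sup' Finset.univ_nonempty F -
      Finset.univ.inf' Finset.univ_nonempty F := rfl
  rw [hLREP, hA, abs_le]
  constructor <;> linarith

/-- Proposition 2(iii.1): with `N_H(N)/N` bounded, the visible RBM model sequence is
S-unstable iff `A_N/N → ∞`; moreover if `A_N/N` is bounded then the visible model sequence
is S-stable. -/
theorem prop2_iii_1 (NH : ℕ → ℕ)
    (θV : ∀ N : ℕ, Fin N → ℝ) (θH : ∀ N : ℕ, Fin (NH N) → ℝ)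
    (θVH : ∀ N : ℕ, Fin N → Fin (NH N) → ℝ)
    (hNH : ∃ C : ℝ, ∀ N : ℕ, 1 ≤ N → (NH N : ℝ) / N ≤ C) :
    (Filter.Tendsto (fun N : ℕ => LREP (rbmMarginal (θV N) (θH N) (θVH N)) / (N : ℝ))
        Filter.atTop Filter.atTop ↔
      Filter.Tendsto (fun N : ℕ => rbmA (θV N) (θH N) (θVH N) / (N : ℝ))
        Filter.atTop Filter.atTop) ∧
    ((∃ C : ℝ, ∀ N : ℕ, 1 ≤ N → rbmA (θV N) (θH N) (θVH N) / (N : ℝ) ≤ C) →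
      ∃ C : ℝ, ∀ N : ℕ, 1 ≤ N →
        LREP (rbmMarginal (θV N) (θH N) (θVH N)) / (N : ℝ) ≤ C) := by
  obtain ⟨C, hC⟩ := hNH
  set a : ℕ → ℝ := fun N => LREP (rbmMarginal (θV N) (θH N) (θVH N)) / (N : ℝ) with ha
  set b : ℕ → ℝ := fun N => rbmA (θV N) (θH N) (θVH N) / (N : ℝ) with hb
  set K : ℝ := C * Real.log 2 with hK
  have hbd : ∀ N : ℕ, 1 ≤ N → |a N - b N| ≤ K := by
    intro N hN
    have hNpos : (0 : ℝ) < N := by exact_mod_cast hN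
    have h1 : |a N - b N| =
        |LREP (rbmMarginal (θV N) (θH N) (θVH N)) - rbmA (θV N) (θH N) (θVH N)| / N := by
      rw [ha, hb]
      rw [div_sub_div_same, abs_div, abs_of_pos hNpos]
    rw [h1]
    have h2 := rbm_key (θV N) (θH N) (θVH N)
    calc |LREP (rbmMarginal (θV N) (θH N) (θVH N)) - rbmA (θV N) (θH N) (θVH N)| / N
        ≤ ((NH N : ℝ) * Real.log 2) / N := by gcongr
      _ = ((NH N : ℝ) / N) * Real.log 2 := by ring
      _ ≤ K := by
          rw [hK]
          exact mul_le_mul_of_nonneg_right (hC N hN)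
            (Real.log_nonneg (by norm_num))
  constructor
  · constructor
    · intro ht
      apply Filter.tendsto_atTop_mono' Filter.atTop
        (f₁ := fun N => a N + (-K)) _
        (Filter.tendsto_atTop_add_const_right _ _ ht)
      filter_upwards [Filter.eventually_ge_atTop 1] with N hN
      have := (abs_le.mp (hbd N hN)).2
      linarith
    · intro ht
      apply Filter.tendsto_atTop_mono' Filter.atTop
        (f₁ := fun N => b N + (-K)) _
        (Filter.tendsto_atTop_add_const_right _ _ ht)
      filter_upwards [Filter.eventually_ge_atTop 1] with N hN
      have := (abs_le.mp (hbd N hN)).1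
      linarith
  · rintro ⟨C', hC'⟩
    refine ⟨C' + K, fun N hN => ?_⟩
    have h1 := (abs_le.mp (hbd N hN)).2
    have h2 := hC' N hN
    show a N ≤ C' + K
    linarith
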